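/- arXiv:1603.01437 — 4 statements merged into one kernel-verified Lean document; each statement's English description precedes it below -/
import Mathlib

section
/- For any Hermitian operators Z and ρ_j with Z ≥ ρ_j for all j ∈ {1,…,n} (in the Loewner order), and a POVM {M_j} (positive operators summing to I) with ZM_j = ρ_j M_j for all j, the quantity ∑_j Tr(ρ_j N_j) over any other POVM {N_j} is at most Tr Z. -/
open scoped ComplexOrder

namespace Matrix

variable {n 𝕜 : Type*} [Fintype n] [RCLike 𝕜]

/-- Writing `A = Bᴴ B`, cyclicity turns `tr (A C)` into the trace of the positive `B C Bᴴ`. -/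
lemma PosSemidef.trace_mul_nonneg {A C : Matrix n n 𝕜} (hA : A.PosSemidef) (hC : C.PosSemidef) :
    0 ≤ (A * C).trace := by
  classical
  open scoped MatrixOrder in
  obtain ⟨B, rfl⟩ := CStarAlgebra.nonneg_iff_eq_star_mul_self.mp hA.nonneg
  rw [Matrix.mul_assoc, trace_mul_comm]
  exact (hC.mul_mul_conjTranspose_same B).trace_nonneg

lemma trace_mul_le_trace_mul_of_posSemidef_sub {A B C : Matrix n n 𝕜}
    (hBA : (B - A).PosSemidef) (hC : C.PosSemidef) : (A * C).trace ≤ (B * C).trace := by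
  have h := hBA.trace_mul_nonneg hC
  rwa [Matrix.sub_mul, trace_sub, sub_nonneg] at h

end Matrix

theorem optimal_povm_success_le_trace_general
    {d : Type*} [Fintype d] [DecidableEq d] {n : ℕ}
    (Z : Matrix d d ℂ) (ρ : Fin n → Matrix d d ℂ)
    (hmaj : ∀ j, (Z - ρ j).PosSemidef)
    (N : Fin n → Matrix d d ℂ)
    (hN : ∀ j, (N j).PosSemidef) (hNsum : ∑ j, N j = 1) :
    ∑ j, (ρ j * N j).trace ≤ Z.trace := by
  calc ∑ j, (ρ j * N j).trace
      ≤ ∑ j, (Z * N j).trace :=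
        Finset.sum_le_sum fun j _ ↦ Matrix.trace_mul_le_trace_mul_of_posSemidef_sub (hmaj j) (hN j)
    _ = Z.trace := by rw [← Matrix.trace_sum, ← Finset.mul_sum, hNsum, Matrix.mul_one]

theorem optimal_povm_success_le_trace
    {d : Type*} [Fintype d] [DecidableEq d] {n : ℕ}
    (Z : Matrix d d ℂ) (ρ : Fin n → Matrix d d ℂ)
    (hZ : Z.IsHermitian) (hρ : ∀ j, (ρ j).IsHermitian)
    (hmaj : ∀ j, (Z - ρ j).PosSemidef)
    (M : Fin n → Matrix d d ℂ)
    (hM : ∀ j, (M j).PosSemidef) (hMsum : ∑ j, M j = 1)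
    (hZM : ∀ j, Z * M j = ρ j * M j)
    (N : Fin n → Matrix d d ℂ)
    (hN : ∀ j, (N j).PosSemidef) (hNsum : ∑ j, N j = 1) :
    ∑ j, (ρ j * N j).trace ≤ Z.trace :=
  optimal_povm_success_le_trace_general Z ρ hmaj N hN hNsum
end

section
/- Let ρ_1,…,ρ_n be positive semidefinite operators and {M_j} a POVM. If there exists a positive semidefinite Z with Z ≥ ρ_j for all j and ∑_j Tr((Z − ρ_j)M_j) = 0, then (Z − ρ_j)M_j = 0 for every j. -/
/-!
Writing `A = XᴴX` and `B = YᴴY`, the trace of `AB` is `tr((XYᴴ)ᴴ(XYᴴ)) = ‖XYᴴ‖²`, so it is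
nonnegative and vanishes only when `XYᴴ = 0`, which forces `AB = Xᴴ(XYᴴ)Y = 0`. A sum of such
nonnegative traces vanishes only if every term does.
-/

open scoped ComplexOrder

namespace Matrix

open scoped MatrixOrder

lemma trace_conjTranspose_mul_self_mul_conjTranspose_mul_self {m n p R : Type*}
    [Fintype m] [Fintype n] [Fintype p] [CommSemiring R] [StarRing R]
    (X : Matrix m n R) (Y : Matrix p n R) :
    (Xᴴ * X * (Yᴴ * Y)).trace = ((X * Yᴴ)ᴴ * (X * Yᴴ)).trace := by
  rw [conjTranspose_mul, conjTranspose_conjTranspose, Matrix.mul_assoc Y, trace_mul_comm Y]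
  simp only [Matrix.mul_assoc]

variable {n 𝕜 : Type*} [Fintype n] [RCLike 𝕜] {A B : Matrix n n 𝕜}

lemma PosSemidef.exists_eq_conjTranspose_mul_self (hA : A.PosSemidef) :
    ∃ X : Matrix n n 𝕜, A = Xᴴ * X := by
  classical
  exact CStarAlgebra.nonneg_iff_eq_star_mul_self.mp hA.nonneg

lemma PosSemidef.trace_mul_nonneg_s4 (hA : A.PosSemidef) (hB : B.PosSemidef) :
    0 ≤ (A * B).trace := by
  obtain ⟨X, rfl⟩ := hA.exists_eq_conjTranspose_mul_self
  obtain ⟨Y, rfl⟩ := hB.exists_eq_conjTranspose_mul_self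
  rw [trace_conjTranspose_mul_self_mul_conjTranspose_mul_self]
  exact (posSemidef_conjTranspose_mul_self _).trace_nonneg

lemma PosSemidef.trace_mul_eq_zero_iff (hA : A.PosSemidef) (hB : B.PosSemidef) :
    (A * B).trace = 0 ↔ A * B = 0 := by
  refine ⟨fun h ↦ ?_, fun h ↦ by rw [h, trace_zero]⟩
  obtain ⟨X, rfl⟩ := hA.exists_eq_conjTranspose_mul_self
  obtain ⟨Y, rfl⟩ := hB.exists_eq_conjTranspose_mul_self
  rw [trace_conjTranspose_mul_self_mul_conjTranspose_mul_self,
    trace_conjTranspose_mul_self_eq_zero_iff] at h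
  rw [Matrix.mul_assoc, ← Matrix.mul_assoc X, h, Matrix.zero_mul, Matrix.mul_zero]

end Matrix

theorem mul_eq_zero_of_sum_trace_eq_zero_general
    {d : Type*} [Fintype d] {n : ℕ}
    (ρ : Fin n → Matrix d d ℂ)
    (M : Fin n → Matrix d d ℂ)
    (hM : ∀ j, (M j).PosSemidef)
    (Z : Matrix d d ℂ)
    (hmaj : ∀ j, (Z - ρ j).PosSemidef)
    (hsum : ∑ j, ((Z - ρ j) * M j).trace = 0) :
    ∀ j, (Z - ρ j) * M j = 0 := by
  have hnonneg : ∀ j ∈ Finset.univ, 0 ≤ ((Z - ρ j) * M j).trace :=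
    fun j _ ↦ (hmaj j).trace_mul_nonneg_s4 (hM j)
  intro j
  exact ((hmaj j).trace_mul_eq_zero_iff (hM j)).mp
    ((Finset.sum_eq_zero_iff_of_nonneg hnonneg).mp hsum j (Finset.mem_univ j))

theorem mul_eq_zero_of_sum_trace_eq_zero
    {d : Type*} [Fintype d] [DecidableEq d] {n : ℕ}
    (ρ : Fin n → Matrix d d ℂ) (hρ : ∀ j, (ρ j).PosSemidef)
    (M : Fin n → Matrix d d ℂ)
    (hM : ∀ j, (M j).PosSemidef) (hMsum : ∑ j, M j = 1)
    (Z : Matrix d d ℂ) (hZ : Z.PosSemidef)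
    (hmaj : ∀ j, (Z - ρ j).PosSemidef)
    (hsum : ∑ j, ((Z - ρ j) * M j).trace = 0) :
    ∀ j, (Z - ρ j) * M j = 0 :=
  mul_eq_zero_of_sum_trace_eq_zero_general ρ M hM Z hmaj hsum
end

section
/- For a completely positive map ξ with Choi matrix Z, sup over density matrices ψ on H of Tr(ξ(ψ)) equals ‖Tr_K Z‖, the operator norm of the partial trace of Z over K. -/
open scoped ComplexOrder

variable {H K : Type*} [Fintype H] [DecidableEq H] [Fintype K] [DecidableEq K]

/-- Partial trace over the first factor `K` of `K × H`. -/
noncomputable def ptK (M : Matrix (K × H) (K × H) ℂ) : Matrix H H ℂ :=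
  Matrix.of fun i j => ∑ k : K, M (k, i) (k, j)

/-- The Choi matrix of a linear map on matrices:
`C(ξ) = (ξ ⊗ id)(|ψ_H⟩⟨ψ_H|)` with `|ψ_H⟩ = ∑ i, |i⟩⊗|i⟩`. -/
noncomputable def choi (ξ : Matrix H H ℂ →ₗ[ℂ] Matrix K K ℂ) :
    Matrix (K × H) (K × H) ℂ :=
  Matrix.of fun p q => ξ (Matrix.single p.2 q.2 1) p.1 q.1

/-- The map `ξ ⊗ id` acting on `B(H ⊗ H)`. -/
noncomputable def tensorId (ξ : Matrix H H ℂ →ₗ[ℂ] Matrix K K ℂ)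
    (M : Matrix (H × H) (H × H) ℂ) : Matrix (K × H) (K × H) ℂ :=
  Matrix.of fun p q => ξ (Matrix.of fun i j => M (i, p.2) (j, q.2)) p.1 q.1

/-- The trace norm `‖A‖₁ = Tr √(AᴴA)`. -/
noncomputable def traceNorm {d : Type*} [Fintype d] [DecidableEq d]
    (A : Matrix d d ℂ) : ℝ :=
  (((Matrix.posSemidef_conjTranspose_mul_self A).isHermitian.eigenvectorUnitary.1 *
    Matrix.diagonal (((↑) : ℝ → ℂ) ∘ (√·) ∘ (Matrix.posSemidef_conjTranspose_mul_self A).isHermitian.eigenvalues) *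
    (star (Matrix.posSemidef_conjTranspose_mul_self A).isHermitian.eigenvectorUnitary : Matrix d d ℂ)).trace).re

/-- The operator (spectral) norm of a matrix. -/
noncomputable def opNorm {d : Type*} [Fintype d] [DecidableEq d]
    (A : Matrix d d ℂ) : ℝ :=
  ‖LinearMap.toContinuousLinearMap (Matrix.toEuclideanLin A)‖

/-- The diamond norm: `sup` over states `τ` on `H ⊗ H` of `‖(ξ ⊗ id)(τ)‖₁`. -/
noncomputable def diamondNorm (ξ : Matrix H H ℂ →ₗ[ℂ] Matrix K K ℂ) : ℝ :=
  ⨆ τ : {τ : Matrix (H × H) (H × H) ℂ // τ.PosSemidef ∧ τ.trace = 1},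
    traceNorm (tensorId ξ τ.1)

/-! By linearity, `Tr ξ(ψ) = Tr (A ψᵀ)` with `A = Tr_K Z`, which is positive semidefinite because
`Z` is, and `ψ ↦ ψᵀ` permutes the density matrices. For positive `A`, `A ≤ ‖A‖ • 1` bounds
`Tr (A ψ) ≤ ‖A‖ Tr ψ`, and since `‖A‖` lies in the spectrum of `A`, the projection onto a unit
eigenvector for the eigenvalue `‖A‖` attains the bound. -/

open scoped Matrix MatrixOrder Matrix.Norms.L2Operator

lemma opNorm_eq_l2_opNorm {n : Type*} [Fintype n] [DecidableEq n] (A : Matrix n n ℂ) :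
    opNorm A = ‖A‖ :=
  rfl

namespace Matrix

variable {n : Type*} [Fintype n] [DecidableEq n]

theorem IsHermitian.re_trace_mul_le_norm_mul {A B : Matrix n n ℂ} (hA : A.IsHermitian)
    (hB : B.PosSemidef) : (A * B).trace.re ≤ ‖A‖ * B.trace.re := by
  obtain ⟨C, rfl⟩ := CStarAlgebra.nonneg_iff_eq_star_mul_self.mp hB.nonneg
  have hle : C * A * star C ≤ C * algebraMap ℝ _ ‖A‖ * star C :=
    star_right_conjugate_le_conjugate hA.isSelfAdjoint.le_algebraMap_norm_self C
  calc (A * (star C * C)).trace.re = (C * A * star C).trace.re := by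
        rw [trace_mul_cycle, trace_mul_comm]
    _ ≤ (C * algebraMap ℝ _ ‖A‖ * star C).trace.re :=
        Complex.re_le_re ((tracePositiveLinearMap n ℂ ℂ).mono hle)
    _ = ‖A‖ * (star C * C).trace.re := by
        rw [Algebra.algebraMap_eq_smul_one, mul_smul_comm, mul_one, smul_mul_assoc, trace_smul,
          trace_mul_comm C, Complex.real_smul, Complex.re_ofReal_mul]

theorem PosSemidef.exists_eigenvalues_eq_norm [Nonempty n] {A : Matrix n n ℂ}
    (hA : A.PosSemidef) : ∃ i, hA.1.eigenvalues i = ‖A‖ := by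
  have := CStarAlgebra.norm_mem_spectrum_of_nonneg hA.nonneg
  rwa [hA.1.spectrum_real_eq_range_eigenvalues] at this

theorem PosSemidef.iSup_re_trace_mul_eq_norm [Nonempty n] {A : Matrix n n ℂ}
    (hA : A.PosSemidef) :
    ⨆ ψ : {ψ : Matrix n n ℂ // ψ.PosSemidef ∧ ψ.trace = 1}, (A * ψ.1).trace.re = ‖A‖ := by
  have hle (ψ : {ψ : Matrix n n ℂ // ψ.PosSemidef ∧ ψ.trace = 1}) : (A * ψ.1).trace.re ≤ ‖A‖ := by
    simpa [ψ.2.2] using hA.1.re_trace_mul_le_norm_mul ψ.2.1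
  obtain ⟨i, hi⟩ := hA.exists_eigenvalues_eq_norm
  set v : n → ℂ := ⇑(hA.1.eigenvectorBasis i)
  have hv : v ⬝ᵥ star v = 1 := by
    rw [← hA.1.eigenvectorBasis.inner_eq_one i, EuclideanSpace.inner_eq_star_dotProduct]
  let ψ₀ : {ψ : Matrix n n ℂ // ψ.PosSemidef ∧ ψ.trace = 1} :=
    ⟨vecMulVec v (star v), posSemidef_vecMulVec_self_star v, by rw [trace_vecMulVec, hv]⟩
  have hψ₀ : (A * ψ₀.1).trace.re = ‖A‖ := by
    simp [ψ₀, mul_vecMulVec, hA.1.mulVec_eigenvectorBasis, v, hv, hi]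
  have : Nonempty {ψ : Matrix n n ℂ // ψ.PosSemidef ∧ ψ.trace = 1} := ⟨ψ₀⟩
  exact le_antisymm (ciSup_le hle) (hψ₀ ▸ le_ciSup ⟨‖A‖, Set.forall_mem_range.2 hle⟩ ψ₀)

end Matrix

section

variable {m n : Type*} [Fintype m]

lemma ptK_eq_sum_submatrix (M : Matrix (m × n) (m × n) ℂ) :
    ptK M = ∑ k, M.submatrix (Prod.mk k) (Prod.mk k) := by
  ext i j
  simp [ptK, Matrix.sum_apply]

lemma Matrix.PosSemidef.ptK {M : Matrix (m × n) (m × n) ℂ} (hM : M.PosSemidef) :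
    (ptK M).PosSemidef := by
  rw [ptK_eq_sum_submatrix]
  exact Matrix.posSemidef_sum _ fun k _ => hM.submatrix _

lemma trace_apply_eq_trace_ptK_choi_mul_transpose [Fintype n] [DecidableEq n]
    (ξ : Matrix n n ℂ →ₗ[ℂ] Matrix m m ℂ) (ψ : Matrix n n ℂ) :
    (ξ ψ).trace = (ptK (choi ξ) * ψᵀ).trace := by
  induction ψ using Matrix.induction_on' with
  | h_zero => simp
  | h_add p q hp hq => simp [hp, hq, Matrix.mul_add]
  | h_std_basis i j x =>
    have hsingle : Matrix.single i j x = x • Matrix.single i j 1 := by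
      rw [Matrix.smul_single, smul_eq_mul, mul_one]
    rw [hsingle, map_smul, Matrix.trace_smul, Matrix.transpose_smul, Matrix.mul_smul,
      Matrix.trace_smul, Matrix.transpose_single, Matrix.trace_mul_single]
    simp [ptK, choi, Matrix.trace]

end

theorem iSup_trace_eq_opNorm_ptK_choi [Nonempty H]
    (ξ : Matrix H H ℂ →ₗ[ℂ] Matrix K K ℂ)
    (hCP : (choi ξ).PosSemidef) :
    (⨆ ψ : {ψ : Matrix H H ℂ // ψ.PosSemidef ∧ ψ.trace = 1},
        ((ξ ψ.1).trace).re) = opNorm (ptK (choi ξ)) := by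
  let transposeState : {ψ : Matrix H H ℂ // ψ.PosSemidef ∧ ψ.trace = 1} ≃
      {ψ : Matrix H H ℂ // ψ.PosSemidef ∧ ψ.trace = 1} :=
    (Matrix.transposeAddEquiv H H ℂ).toEquiv.subtypeEquiv fun ψ => by
      simp [Matrix.posSemidef_transpose_iff]
  simp_rw [trace_apply_eq_trace_ptK_choi_mul_transpose]
  rw [opNorm_eq_l2_opNorm, ← hCP.ptK.iSup_re_trace_mul_eq_norm, ← transposeState.iSup_comp]
  rfl
end

section
/- Let {|ξ_i⟩}, {|η_i⟩} be orthonormal bases of H with c_i := (1 − |⟨ξ_i, η_i⟩|²)^{1/2} > 0 for all i and d := (2/dim H)·∑_i c_i. Then d − c_j > 0 for every j whenever the condition ∑_i c_i P_{ξ_i,η_i} = dI holds, where P_{ξ_i,η_i} is the projection onto span{ξ_i, η_i}. -/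
open scoped ComplexOrder

/-- The rank-one projection `|ψ⟩⟨ψ|` as a matrix. -/
noncomputable def projMat {ι : Type*} [Fintype ι] (ψ : ι → ℂ) : Matrix ι ι ℂ :=
  Matrix.vecMulVec ψ (star ψ)

/-!
Pairing the condition `∑ cᵢ Pᵢ = d • 1` with `ξⱼ` gives `d = ∑ᵢ cᵢ ‖Pᵢ ξⱼ‖²`, whose `j`-th term
is `cⱼ` since `Pⱼ` fixes `ξⱼ`. If `d ≤ cⱼ`, every other `Pᵢ ξⱼ` vanishes, so `ξⱼ ⊥ ηᵢ` for
`i ≠ j`, and Parseval in the basis `η` forces `|⟨ηⱼ, ξⱼ⟩| = 1`, i.e. `cⱼ = 0`.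
-/

open Matrix

namespace Matrix

variable {n R : Type*} [Fintype n] [CommRing R] {P : Matrix n n R}

theorem mulVec_eq_self_of_mem_range (hP : P * P = P) {w : n → R}
    (hw : w ∈ LinearMap.range P.mulVecLin) : P *ᵥ w = w := by
  obtain ⟨u, rfl⟩ := hw
  rw [mulVecLin_apply, mulVec_mulVec, hP]

variable [StarRing R]

theorem IsHermitian.star_dotProduct_mulVec_of_mulVec_eq_self (hP : P.IsHermitian)
    {w : n → R} (hw : P *ᵥ w = w) (v : n → R) : star w ⬝ᵥ (P *ᵥ v) = star w ⬝ᵥ v := by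
  conv_rhs => rw [← hw]
  rw [star_mulVec, hP.eq, dotProduct_mulVec]

theorem IsHermitian.star_dotProduct_mulVec_of_mul_self (hP : P.IsHermitian) (hP2 : P * P = P)
    (v : n → R) : star v ⬝ᵥ (P *ᵥ v) = star (P *ᵥ v) ⬝ᵥ (P *ᵥ v) := by
  rw [hP.star_dotProduct_mulVec_of_mulVec_eq_self (w := P *ᵥ v) (by rw [mulVec_mulVec, hP2]),
    star_mulVec, hP.eq, dotProduct_mulVec]

end Matrix

theorem sum_star_mul_self_star_dotProduct_of_orthonormal {n R : Type*} [Fintype n] [DecidableEq n]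
    [CommRing R] [StarRing R] {η : n → n → R}
    (hη : ∀ i j, star (η i) ⬝ᵥ η j = if i = j then 1 else 0) (v : n → R) :
    ∑ i, star (star (η i) ⬝ᵥ v) * (star (η i) ⬝ᵥ v) = star v ⬝ᵥ v := by
  set U : Matrix n n R := (of η)ᵀ
  have hU : star U * U = 1 := by
    ext i j
    simpa [U, mul_apply, dotProduct, one_apply] using hη i j
  have hUU : U * star U = 1 := mul_eq_one_comm.mp hU
  calc ∑ i, star (star (η i) ⬝ᵥ v) * (star (η i) ⬝ᵥ v)
      = star (Uᴴ *ᵥ v) ⬝ᵥ (Uᴴ *ᵥ v) := by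
        simp [U, dotProduct, mulVec, mul_comm]
    _ = star v ⬝ᵥ v := by
        rw [star_mulVec, conjTranspose_conjTranspose, ← dotProduct_mulVec, mulVec_mulVec,
          ← star_eq_conjTranspose, hUU, one_mulVec]

theorem eq_zero_of_sum_mul_le_mul {ι R : Type*} [Fintype ι] [DecidableEq ι] [Ring R]
    [PartialOrder R] [IsOrderedRing R] [NoZeroDivisors R] {c q : ι → R} (hc : ∀ i, 0 < c i)
    (hq : ∀ i, 0 ≤ q i)
    {j : ι} (h : ∑ i, c i * q i ≤ c j * q j) {i : ι} (hij : i ≠ j) : q i = 0 := by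
  have hterm : ∀ k, 0 ≤ c k * q k := fun k => mul_nonneg (hc k).le (hq k)
  rw [← Finset.add_sum_erase _ _ (Finset.mem_univ j), add_le_iff_nonpos_right] at h
  have hrest := (Finset.sum_eq_zero_iff_of_nonneg fun k _ => hterm k).mp
    (h.antisymm (Finset.sum_nonneg fun k _ => hterm k)) i (by simp [hij])
  exact (mul_eq_zero.mp hrest).resolve_left (hc i).ne'

theorem d_sub_c_pos_general
    {ι : Type*} [Fintype ι] [DecidableEq ι]
    (ξ η : ι → ι → ℂ)
    (hξ : ∀ i j, (∑ k, (starRingEnd ℂ) (ξ i k) * ξ j k) = if i = j then 1 else 0)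
    (hη : ∀ i j, (∑ k, (starRingEnd ℂ) (η i k) * η j k) = if i = j then 1 else 0)
    (c : ι → ℝ)
    (hc : ∀ i, c i = Real.sqrt (1 - ‖∑ k, (starRingEnd ℂ) (ξ i k) * η i k‖ ^ 2))
    (hcpos : ∀ i, 0 < c i)
    (d : ℝ)
    (P : ι → Matrix ι ι ℂ)
    (hP : ∀ i, (P i).IsHermitian ∧ P i * P i = P i ∧
      LinearMap.range (P i).mulVecLin = Submodule.span ℂ {ξ i, η i})
    (hcond : (∑ i, (c i : ℂ) • P i) = (d : ℂ) • (1 : Matrix ι ι ℂ)) :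
    ∀ j, c j < d := by
  intro j
  by_contra! hdj
  have hfix : ∀ i, ∀ w ∈ Submodule.span ℂ {ξ i, η i}, P i *ᵥ w = w := fun i w hw =>
    mulVec_eq_self_of_mem_range (hP i).2.1 ((hP i).2.2 ▸ hw)
  have hξj : star (ξ j) ⬝ᵥ ξ j = 1 := by simpa [dotProduct] using hξ j j
  set q : ι → ℂ := fun i => star (P i *ᵥ ξ j) ⬝ᵥ (P i *ᵥ ξ j)
  have hd : (d : ℂ) = ∑ i, (c i : ℂ) * q i := by
    have := congrArg (fun M => star (ξ j) ⬝ᵥ (M *ᵥ ξ j)) hcond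
    simpa [sum_mulVec, dotProduct_sum, smul_mulVec, hξj,
      fun i => (hP i).1.star_dotProduct_mulVec_of_mul_self (hP i).2.1] using this.symm
  have hqj : q j = 1 := by
    simp [q, hfix j (ξ j) (Submodule.subset_span (by simp)), hξj]
  have hPξ : ∀ i ≠ j, P i *ᵥ ξ j = 0 := fun i hij => dotProduct_star_self_eq_zero.mp <|
    eq_zero_of_sum_mul_le_mul (c := fun i => (c i : ℂ)) (q := q)
      (fun i => by simpa using hcpos i) (fun i => dotProduct_star_self_nonneg _)
      (by rw [← hd, hqj, mul_one]; exact_mod_cast hdj) hij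
  have hηξ : ∀ i ≠ j, star (η i) ⬝ᵥ ξ j = 0 := fun i hij => by
    rw [← (hP i).1.star_dotProduct_mulVec_of_mulVec_eq_self
      (hfix i (η i) (Submodule.subset_span (by simp))), hPξ i hij, dotProduct_zero]
  have hunit : star (star (η j) ⬝ᵥ ξ j) * (star (η j) ⬝ᵥ ξ j) = 1 := by
    rw [← hξj, ← sum_star_mul_self_star_dotProduct_of_orthonormal (by simpa [dotProduct] using hη),
      Finset.sum_eq_single j (fun i _ hij => by simp [hηξ i hij]) (by simp)]
  have hoverlap : ‖∑ k, (starRingEnd ℂ) (ξ j k) * η j k‖ ^ 2 = 1 := by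
    have hsum : ∑ k, (starRingEnd ℂ) (ξ j k) * η j k = star (star (η j) ⬝ᵥ ξ j) := by
      simp [dotProduct, star_sum, mul_comm]
    rw [hsum, norm_star]
    exact_mod_cast (Complex.conj_mul' _).symm.trans hunit
  exact (hcpos j).ne' (by simp [hc j, hoverlap])

theorem d_sub_c_pos
    {ι : Type*} [Fintype ι] [DecidableEq ι] [Nonempty ι]
    (ξ η : ι → ι → ℂ)
    (hξ : ∀ i j, (∑ k, (starRingEnd ℂ) (ξ i k) * ξ j k) = if i = j then 1 else 0)
    (hη : ∀ i j, (∑ k, (starRingEnd ℂ) (η i k) * η j k) = if i = j then 1 else 0)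
    (c : ι → ℝ)
    (hc : ∀ i, c i = Real.sqrt (1 - ‖∑ k, (starRingEnd ℂ) (ξ i k) * η i k‖ ^ 2))
    (hcpos : ∀ i, 0 < c i)
    (d : ℝ) (hd : d = (2 / (Fintype.card ι : ℝ)) * ∑ i, c i)
    (P : ι → Matrix ι ι ℂ)
    (hP : ∀ i, (P i).IsHermitian ∧ P i * P i = P i ∧
      LinearMap.range (P i).mulVecLin = Submodule.span ℂ {ξ i, η i})
    (hcond : (∑ i, (c i : ℂ) • P i) = (d : ℂ) • (1 : Matrix ι ι ℂ)) :
    ∀ j, c j < d :=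
  d_sub_c_pos_general ξ η hξ hη c hc hcpos d P hP hcond
end
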